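/- For n≥2, there is an injective group homomorphism i_n: B(Ã_n) → B(B_{n+1}) sending σ_i ↦ σ_i for 1≤i≤n and a_{n+1} ↦ φ_{n+1}σ_nφ_{n+1}^{-1}, where φ_{n+1} = tσ_1⋯σ_n; that is, the subgroup of B(B_{n+1}) generated by σ_1,…,σ_n and φ_{n+1}σ_nφ_{n+1}^{-1} is presented by exactly the defining relations of B(Ã_n). -/

import Mathlib

/-!
Conjugation by `φ = t σ₁ ⋯ σₙ` in `B(B_{n+1})` rotates the cycle
`σ₁ → σ₂ → ⋯ → σₙ → a_{n+1} → σ₁` of the affine Dynkin diagram, so the relations of `B(Ã_n)`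
among `σ₁, …, σₙ, a_{n+1}` are conjugates of braid relations among the `σᵢ`; this gives `ι`.
The same rotation is an automorphism `c` of `B(Ã_n)`, of order `n + 1`. In `B(Ã_n) ⋊_c ℤ` the
generator `φ` of `ℤ` rotates the `σᵢ` in the same way; since `σ₁ ⋯ σₙ` also conjugates each
`σᵢ` to `σᵢ₊₁` and its square conjugates `σₙ` to `σ₁`, the element `t := φ (σ₁ ⋯ σₙ)⁻¹` satisfies
the relations of `B(B_{n+1})`. The resulting map `B(B_{n+1}) → B(Ã_n) ⋊_c ℤ` sends `φ_{n+1}` to `φ`,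
so composed with `ι` it is the inclusion of `B(Ã_n)`, and `ι` is injective.
-/

/-- Relators of the `B`-type braid group `B(B_{n+1})`: generator `some i` (`i : Fin n`)
stands for `σ_{i+1}`, and `none` stands for `t`. -/
def braidRelsB (n : ℕ) : Set (FreeGroup (Option (Fin n))) :=
  { r | (∃ i j : Fin n, (i : ℕ) + 2 ≤ (j : ℕ) ∧
          r = FreeGroup.of (some i) * FreeGroup.of (some j) *
              (FreeGroup.of (some j) * FreeGroup.of (some i))⁻¹) ∨
        (∃ i j : Fin n, (j : ℕ) = (i : ℕ) + 1 ∧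
          r = FreeGroup.of (some i) * FreeGroup.of (some j) * FreeGroup.of (some i) *
              (FreeGroup.of (some j) * FreeGroup.of (some i) * FreeGroup.of (some j))⁻¹) ∨
        (∃ i : Fin n, 1 ≤ (i : ℕ) ∧
          r = FreeGroup.of (some i) * FreeGroup.of none *
              (FreeGroup.of none * FreeGroup.of (some i))⁻¹) ∨
        (∃ i : Fin n, (i : ℕ) = 0 ∧
          r = FreeGroup.of (some i) * FreeGroup.of none * FreeGroup.of (some i) *
              FreeGroup.of none *
              (FreeGroup.of none * FreeGroup.of (some i) * FreeGroup.of none *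
                FreeGroup.of (some i))⁻¹) }

/-- The `B`-type braid group `B(B_{n+1})`, with generators `σ_1, …, σ_n` and `t`. -/
abbrev BraidB (n : ℕ) : Type := PresentedGroup (braidRelsB n)

/-- `φ_{n+1} = t σ_1 σ_2 ⋯ σ_n` in `B(B_{n+1})`. -/
noncomputable def phiB (n : ℕ) : BraidB n :=
  PresentedGroup.of none *
    ((List.finRange n).map fun i => (PresentedGroup.of (some i) : BraidB n)).prod

/-- `a_{n+1} = φ_{n+1} σ_n φ_{n+1}⁻¹` in `B(B_{n+1})`. -/
noncomputable def aB (n : ℕ) (h : 0 < n) : BraidB n :=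
  phiB n * PresentedGroup.of (some (⟨n - 1, by omega⟩ : Fin n)) * (phiB n)⁻¹

/-- Relators of the affine braid group `B(Ã_n)`: generator `some i` (`i : Fin n`)
stands for `σ_{i+1}`, and `none` stands for `a_{n+1}`. -/
def braidRelsAff (n : ℕ) : Set (FreeGroup (Option (Fin n))) :=
  { r | (∃ i j : Fin n, (i : ℕ) + 2 ≤ (j : ℕ) ∧
          r = FreeGroup.of (some i) * FreeGroup.of (some j) *
              (FreeGroup.of (some j) * FreeGroup.of (some i))⁻¹) ∨
        (∃ i j : Fin n, (j : ℕ) = (i : ℕ) + 1 ∧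
          r = FreeGroup.of (some i) * FreeGroup.of (some j) * FreeGroup.of (some i) *
              (FreeGroup.of (some j) * FreeGroup.of (some i) * FreeGroup.of (some j))⁻¹) ∨
        (∃ i : Fin n, 1 ≤ (i : ℕ) ∧ (i : ℕ) + 2 ≤ n ∧
          r = FreeGroup.of (some i) * FreeGroup.of none *
              (FreeGroup.of none * FreeGroup.of (some i))⁻¹) ∨
        (∃ i : Fin n, ((i : ℕ) = 0 ∨ (i : ℕ) + 1 = n) ∧
          r = FreeGroup.of (some i) * FreeGroup.of none * FreeGroup.of (some i) *
              (FreeGroup.of none * FreeGroup.of (some i) * FreeGroup.of none)⁻¹) }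

/-- The affine (`Ã`-type) braid group `B(Ã_n)`, with generators `σ_1, …, σ_n` and `a_{n+1}`. -/
abbrev BraidAff (n : ℕ) : Type := PresentedGroup (braidRelsAff n)

section ChainProd

variable {G H : Type*} [Group G] [Group H]

def chainProd (s : ℕ → G) (n : ℕ) : G := ((List.range n).map s).prod

lemma chainProd_succ (s : ℕ → G) (n : ℕ) : chainProd s (n + 1) = chainProd s n * s n :=
  List.prod_range_succ s n

lemma chainProd_succ' (s : ℕ → G) (n : ℕ) :
    chainProd s (n + 1) = s 0 * chainProd (fun k => s (k + 1)) n :=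
  List.prod_range_succ' s n

lemma chainProd_congr {s s' : ℕ → G} {n : ℕ} (h : ∀ k < n, s k = s' k) :
    chainProd s n = chainProd s' n :=
  congrArg List.prod (List.map_congr_left fun k hk => h k (List.mem_range.1 hk))

lemma map_chainProd (f : G →* H) (s : ℕ → G) (n : ℕ) :
    f (chainProd s n) = chainProd (fun k => f (s k)) n := by
  rw [chainProd, map_list_prod, List.map_map]
  rfl

lemma SemiconjBy.chainProd {g : G} {s s' : ℕ → G} {n : ℕ}
    (h : ∀ k < n, SemiconjBy g (s k) (s' k)) :
    SemiconjBy g (chainProd s n) (chainProd s' n) := by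
  induction n with
  | zero => exact SemiconjBy.one_right g
  | succ n ih =>
    rw [chainProd_succ, chainProd_succ]
    exact (ih fun k hk => h k (by omega)).mul_right (h n (by omega))

end ChainProd

section Chains

variable {G H : Type*} [Group G] [Group H] {s : ℕ → G} {n : ℕ}

structure IsBraidChain (s : ℕ → G) (n : ℕ) : Prop where
  comm : ∀ i j, i + 2 ≤ j → j < n → s i * s j = s j * s i
  braid : ∀ i, i + 1 < n → s i * s (i + 1) * s i = s (i + 1) * s i * s (i + 1)

structure IsTypeBBraidChain (s : ℕ → G) (t : G) (n : ℕ) : Prop extends IsBraidChain s n where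
  comm_t : ∀ i, 1 ≤ i → i < n → s i * t = t * s i
  braid_t : s 0 * t * s 0 * t = t * s 0 * t * s 0

structure IsAffineBraidChain (s : ℕ → G) (a : G) (n : ℕ) : Prop extends IsBraidChain s n where
  comm_a : ∀ i, 1 ≤ i → i + 2 ≤ n → s i * a = a * s i
  braid_first : s 0 * a * s 0 = a * s 0 * a
  braid_last : s (n - 1) * a * s (n - 1) = a * s (n - 1) * a

/-- Conjugation by `φ` rotates the cycle `s 0 ↦ s 1 ↦ ⋯ ↦ s (n - 1) ↦ φ s (n - 1) φ⁻¹ ↦ s 0`. -/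
structure IsChainRotation (s : ℕ → G) (n : ℕ) (φ : G) : Prop where
  shift : ∀ i, i + 1 < n → SemiconjBy φ (s i) (s (i + 1))
  sq_last : SemiconjBy (φ * φ) (s (n - 1)) (s 0)

lemma IsBraidChain.map (h : IsBraidChain s n) (f : G →* H) :
    IsBraidChain (fun k => f (s k)) n where
  comm i j hij hj := by simp only [← map_mul, h.comm i j hij hj]
  braid i hi := by simp only [← map_mul, h.braid i hi]

lemma IsBraidChain.commute_chainProd (h : IsBraidChain s n) {k m : ℕ} (hmk : m + 1 ≤ k)
    (hk : k < n) : Commute (s k) (chainProd s m) :=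
  SemiconjBy.chainProd fun j hj => (h.comm j k (by omega) hk).symm

lemma IsBraidChain.semiconjBy_chainProd (h : IsBraidChain s n) {i : ℕ} (hi : i + 1 < n) :
    SemiconjBy (chainProd s n) (s i) (s (i + 1)) := by
  suffices ∀ m ≤ n, ∀ j, j + 1 < m → SemiconjBy (chainProd s m) (s j) (s (j + 1)) from
    this n le_rfl i hi
  intro m hm
  induction m with
  | zero => intro j hj; omega
  | succ m ih =>
    intro j hj
    rw [chainProd_succ]
    rcases (by omega : j + 1 < m ∨ j + 1 = m) with hj | rfl
    · exact (ih (by omega) j hj).mul_left (h.comm j m (by omega) (by omega)).symm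
    · have hP := (h.commute_chainProd (m := j) le_rfl (by omega)).eq
      rw [chainProd_succ]
      show chainProd s j * s j * s (j + 1) * s j = s (j + 1) * (chainProd s j * s j * s (j + 1))
      calc chainProd s j * s j * s (j + 1) * s j
          = chainProd s j * (s j * s (j + 1) * s j) := by group
        _ = chainProd s j * s (j + 1) * (s j * s (j + 1)) := by rw [h.braid j (by omega)]; group
        _ = s (j + 1) * (chainProd s j * s j * s (j + 1)) := by rw [← hP]; group

lemma IsBraidChain.isChainRotation_chainProd (h : IsBraidChain s n) :
    IsChainRotation s n (chainProd s n) where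
  shift _ := h.semiconjBy_chainProd
  sq_last := by
    obtain _ | m := n
    · simp [chainProd, SemiconjBy]
    set W := chainProd s (m + 1)
    have hWU : SemiconjBy W (chainProd s m) (chainProd (fun k => s (k + 1)) m) :=
      SemiconjBy.chainProd fun k hk => h.semiconjBy_chainProd (by omega)
    show W * W * s m = s 0 * (W * W)
    calc W * W * s m = s 0 * chainProd (fun k => s (k + 1)) m * W * s m := by
          rw [← chainProd_succ']
      _ = s 0 * (W * chainProd s m) * s m := by rw [hWU.eq]; group
      _ = s 0 * (W * W) := by rw [mul_assoc, mul_assoc, ← chainProd_succ]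

lemma IsTypeBBraidChain.isChainRotation {t : G} (h : IsTypeBBraidChain s t n) (hn : 0 < n) :
    IsChainRotation s n (t * chainProd s n) where
  shift i hi :=
    SemiconjBy.mul_left (h.comm_t (i + 1) (by omega) hi).symm (h.semiconjBy_chainProd hi)
  sq_last := by
    obtain ⟨m, rfl⟩ : ∃ m, n = m + 1 := ⟨n - 1, by omega⟩
    have hsq := h.isChainRotation_chainProd.sq_last.eq
    simp only [chainProd_succ', Nat.add_sub_cancel] at hsq ⊢
    set V := chainProd (fun k => s (k + 1)) m
    have hVt : t * V = V * t :=
      (SemiconjBy.chainProd fun k hk => (h.comm_t (k + 1) (by omega) (by omega)).symm).eq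
    show t * (s 0 * V) * (t * (s 0 * V)) * s m = s 0 * (t * (s 0 * V) * (t * (s 0 * V)))
    calc t * (s 0 * V) * (t * (s 0 * V)) * s m
        = t * s 0 * (V * t) * s 0 * V * s m := by group
      _ = t * s 0 * t * (s 0)⁻¹ * (s 0 * V * (s 0 * V) * s m) := by rw [← hVt]; group
      _ = (t * s 0 * t * s 0) * V * s 0 * V := by rw [hsq]; group
      _ = s 0 * (t * s 0 * (t * V) * s 0 * V) := by rw [← h.braid_t]; group
      _ = s 0 * (t * (s 0 * V) * (t * (s 0 * V))) := by rw [hVt]; group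

end Chains

section Rotation

variable {G : Type*} [Group G] {s : ℕ → G} {n : ℕ} {φ : G}

lemma IsChainRotation.isTypeBBraidChain (hφ : IsChainRotation s n φ) (h : IsBraidChain s n)
    (hn : 0 < n) : IsTypeBBraidChain s (φ * (chainProd s n)⁻¹) n where
  toIsBraidChain := h
  comm_t i hi₁ hi := by
    obtain ⟨j, rfl⟩ : ∃ j, i = j + 1 := ⟨i - 1, by omega⟩
    exact ((hφ.shift j hi).mul_left (h.semiconjBy_chainProd hi).inv_symm_left).eq.symm
  braid_t := by
    obtain ⟨m, rfl⟩ : ∃ m, n = m + 1 := ⟨n - 1, by omega⟩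
    have hφsq := hφ.sq_last.eq
    have hWsq := h.isChainRotation_chainProd.sq_last.eq
    have hφU : φ * chainProd s m = chainProd (fun k => s (k + 1)) m * φ :=
      (SemiconjBy.chainProd fun k hk => hφ.shift k (by omega)).eq
    have hWV := chainProd_succ' s m
    have hWU := chainProd_succ s m
    simp only [Nat.add_sub_cancel] at hφsq hWsq
    set W := chainProd s (m + 1)
    set U := chainProd s m
    set V := chainProd (fun k => s (k + 1)) m
    -- `t s₀ t = φ² s_m W⁻²`, and both `φ²` and `W²` conjugate `s_m` to `s₀`.
    have key : φ * W⁻¹ * s 0 * (φ * W⁻¹) = φ * φ * s m * (W * W)⁻¹ := by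
      have hVφ : V⁻¹ * φ = φ * U⁻¹ := by rw [inv_mul_eq_iff_eq_mul, ← mul_assoc, ← hφU]; group
      calc φ * W⁻¹ * s 0 * (φ * W⁻¹) = φ * (V⁻¹ * φ) * W⁻¹ := by rw [hWV]; group
        _ = φ * φ * s m * (W * W)⁻¹ := by rw [hVφ, hWU]; group
    calc s 0 * (φ * W⁻¹) * s 0 * (φ * W⁻¹)
        = s 0 * (φ * W⁻¹ * s 0 * (φ * W⁻¹)) := by group
      _ = s 0 * (φ * φ) * s m * (W * W)⁻¹ := by rw [key]; group
      _ = φ * φ * s m * ((W * W)⁻¹ * (W * W * s m)) * (W * W)⁻¹ := by rw [← hφsq]; group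
      _ = φ * W⁻¹ * s 0 * (φ * W⁻¹) * s 0 := by rw [hWsq, key]; group

lemma IsChainRotation.isAffineBraidChain (hφ : IsChainRotation s n φ) (h : IsBraidChain s n)
    (hn : 2 ≤ n) : IsAffineBraidChain s (φ * s (n - 1) * φ⁻¹) n := by
  obtain ⟨m, rfl⟩ : ∃ m, n = m + 2 := ⟨n - 2, by omega⟩
  have hφsq : SemiconjBy (φ * φ) (s (m + 1)) (s 0) := hφ.sq_last
  rw [show m + 2 - 1 = m + 1 from rfl, ← MulAut.conj_apply]
  have hc : ∀ i, i + 1 < m + 2 → MulAut.conj φ (s i) = s (i + 1) := fun i hi => by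
    rw [MulAut.conj_apply, (hφ.shift i hi).eq, mul_inv_cancel_right]
  have hca : MulAut.conj φ (MulAut.conj φ (s (m + 1))) = s 0 := by
    simp only [MulAut.conj_apply]
    calc φ * (φ * s (m + 1) * φ⁻¹) * φ⁻¹ = φ * φ * s (m + 1) * (φ * φ)⁻¹ := by group
      _ = s 0 := by rw [hφsq.eq, mul_inv_cancel_right]
  have braid_last : s (m + 1) * MulAut.conj φ (s (m + 1)) * s (m + 1) =
      MulAut.conj φ (s (m + 1)) * s (m + 1) * MulAut.conj φ (s (m + 1)) := by
    simpa only [map_mul, hc m (by omega)] using congrArg (MulAut.conj φ) (h.braid m (by omega))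
  refine ⟨h, fun i hi₁ hi => ?_, ?_, braid_last⟩
  · obtain ⟨j, rfl⟩ : ∃ j, i = j + 1 := ⟨i - 1, by omega⟩
    simpa only [map_mul, hc j (by omega)] using
      congrArg (MulAut.conj φ) (h.comm j (m + 1) (by omega) (by omega))
  · simpa only [map_mul, hca] using (congrArg (MulAut.conj φ) braid_last).symm

end Rotation

lemma IsAffineBraidChain.rotate {G : Type*} [Group G] {s : ℕ → G} {a : G} {n : ℕ}
    (h : IsAffineBraidChain s a n) (hn : 2 ≤ n) :
    IsAffineBraidChain (fun k => if k + 1 < n then s (k + 1) else a) (s 0) n where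
  comm i j hij hj := by
    simp only [if_pos (show i + 1 < n by omega)]
    split_ifs with hj'
    · exact h.comm _ _ (by omega) hj'
    · exact h.comm_a _ (by omega) (by omega)
  braid i hi := by
    simp only [if_pos hi]
    split_ifs with hi'
    · exact h.braid _ hi'
    · rw [show i + 1 = n - 1 by omega]
      exact h.braid_last
  comm_a i hi₁ hi := by
    simp only [if_pos (show i + 1 < n by omega)]
    exact (h.comm 0 (i + 1) (by omega) (by omega)).symm
  braid_first := by
    simp only [if_pos (show 0 + 1 < n by omega)]
    exact (h.braid 0 (by omega)).symm
  braid_last := by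
    simp only [if_neg (show ¬ n - 1 + 1 < n by omega)]
    exact h.braid_first.symm

section Presentations

variable {n : ℕ} {G : Type*} [Group G]

/-- `σ_{k+1}` for `k < n`, and `1` for `k ≥ n`. -/
def braidGen (rels : Set (FreeGroup (Option (Fin n)))) (k : ℕ) : PresentedGroup rels :=
  if h : k < n then PresentedGroup.of (some ⟨k, h⟩) else 1

lemma braidGen_coe (rels : Set (FreeGroup (Option (Fin n)))) (i : Fin n) :
    braidGen rels i = PresentedGroup.of (some i) := by
  simp [braidGen]

lemma isBraidChain_braidGen {rels : Set (FreeGroup (Option (Fin n)))}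
    (hcomm : ∀ i j : Fin n, (i : ℕ) + 2 ≤ j →
      FreeGroup.of (some i) * FreeGroup.of (some j) *
        (FreeGroup.of (some j) * FreeGroup.of (some i))⁻¹ ∈ rels)
    (hbraid : ∀ i j : Fin n, (j : ℕ) = i + 1 →
      FreeGroup.of (some i) * FreeGroup.of (some j) * FreeGroup.of (some i) *
        (FreeGroup.of (some j) * FreeGroup.of (some i) * FreeGroup.of (some j))⁻¹ ∈ rels) :
    IsBraidChain (braidGen rels) n where
  comm i j hij hj := by
    simp only [braidGen, dif_pos hj, dif_pos (show i < n by omega)]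
    exact PresentedGroup.mk_eq_mk_of_mul_inv_mem (hcomm ⟨i, _⟩ ⟨j, hj⟩ hij)
  braid i hi := by
    simp only [braidGen, dif_pos hi, dif_pos (show i < n by omega)]
    exact PresentedGroup.mk_eq_mk_of_mul_inv_mem (hbraid ⟨i, _⟩ ⟨i + 1, hi⟩ rfl)

lemma BraidB.isTypeBBraidChain (n : ℕ) :
    IsTypeBBraidChain (braidGen (braidRelsB n)) (PresentedGroup.of none) n where
  toIsBraidChain := isBraidChain_braidGen (fun i j h => Or.inl ⟨i, j, h, rfl⟩)
    (fun i j h => Or.inr (Or.inl ⟨i, j, h, rfl⟩))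
  comm_t i hi₁ hi := by
    simp only [braidGen, dif_pos hi]
    exact PresentedGroup.mk_eq_mk_of_mul_inv_mem (Or.inr (Or.inr (Or.inl ⟨⟨i, hi⟩, hi₁, rfl⟩)))
  braid_t := by
    rcases Nat.eq_zero_or_pos n with rfl | hn
    · simp [braidGen]
    simp only [braidGen, dif_pos hn]
    exact PresentedGroup.mk_eq_mk_of_mul_inv_mem (Or.inr (Or.inr (Or.inr ⟨⟨0, hn⟩, rfl, rfl⟩)))

lemma BraidAff.isAffineBraidChain (n : ℕ) (hn : 0 < n) :
    IsAffineBraidChain (braidGen (braidRelsAff n)) (PresentedGroup.of none) n where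
  toIsBraidChain := isBraidChain_braidGen (fun i j h => Or.inl ⟨i, j, h, rfl⟩)
    (fun i j h => Or.inr (Or.inl ⟨i, j, h, rfl⟩))
  comm_a i hi₁ hi := by
    simp only [braidGen, dif_pos (show i < n by omega)]
    exact PresentedGroup.mk_eq_mk_of_mul_inv_mem
      (Or.inr (Or.inr (Or.inl ⟨⟨i, by omega⟩, hi₁, hi, rfl⟩)))
  braid_first := by
    simp only [braidGen, dif_pos hn]
    exact PresentedGroup.mk_eq_mk_of_mul_inv_mem
      (Or.inr (Or.inr (Or.inr ⟨⟨0, hn⟩, Or.inl rfl, rfl⟩)))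
  braid_last := by
    simp only [braidGen, dif_pos (show n - 1 < n by omega)]
    exact PresentedGroup.mk_eq_mk_of_mul_inv_mem
      (Or.inr (Or.inr (Or.inr ⟨⟨n - 1, by omega⟩, Or.inr (by simp; omega), rfl⟩)))

def BraidB.lift {s : ℕ → G} {t : G} (h : IsTypeBBraidChain s t n) : BraidB n →* G :=
  PresentedGroup.toGroup (f := fun x => x.elim t fun i => s i) <| by
    rintro r (⟨i, j, hij, rfl⟩ | ⟨i, j, hij, rfl⟩ | ⟨i, hi, rfl⟩ | ⟨i, hi, rfl⟩) <;>
      simp only [map_mul, map_inv, FreeGroup.lift_apply_of, Option.elim, mul_inv_eq_one]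
    · exact h.comm i j hij j.isLt
    · exact hij ▸ h.braid i (hij ▸ j.isLt)
    · exact h.comm_t i hi i.isLt
    · exact hi ▸ h.braid_t

def BraidAff.lift {s : ℕ → G} {a : G} (h : IsAffineBraidChain s a n) : BraidAff n →* G :=
  PresentedGroup.toGroup (f := fun x => x.elim a fun i => s i) <| by
    rintro r (⟨i, j, hij, rfl⟩ | ⟨i, j, hij, rfl⟩ | ⟨i, hi₁, hi, rfl⟩ | ⟨i, hi | hi, rfl⟩) <;>
      simp only [map_mul, map_inv, FreeGroup.lift_apply_of, Option.elim, mul_inv_eq_one]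
    · exact h.comm i j hij j.isLt
    · exact hij ▸ h.braid i (hij ▸ j.isLt)
    · exact h.comm_a i hi₁ hi
    · exact hi ▸ h.braid_first
    · exact (show (i : ℕ) = n - 1 by omega) ▸ h.braid_last

end Presentations

section Lifts

variable {n : ℕ} {G : Type*} [Group G] {s : ℕ → G}

lemma BraidB.lift_braidGen {t : G} (h : IsTypeBBraidChain s t n) {k : ℕ} (hk : k < n) :
    BraidB.lift h (braidGen _ k) = s k := by
  rw [braidGen, dif_pos hk, BraidB.lift, PresentedGroup.toGroup.of]
  rfl

lemma BraidB.lift_of_none {t : G} (h : IsTypeBBraidChain s t n) :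
    BraidB.lift h (PresentedGroup.of none) = t :=
  PresentedGroup.toGroup.of _

lemma BraidAff.lift_braidGen {a : G} (h : IsAffineBraidChain s a n) {k : ℕ} (hk : k < n) :
    BraidAff.lift h (braidGen _ k) = s k := by
  rw [braidGen, dif_pos hk, BraidAff.lift, PresentedGroup.toGroup.of]
  rfl

lemma BraidAff.lift_of_none {a : G} (h : IsAffineBraidChain s a n) :
    BraidAff.lift h (PresentedGroup.of none) = a :=
  PresentedGroup.toGroup.of _

end Lifts

section BraidAffToBraidB

variable {n : ℕ}

lemma phiB_eq : phiB n = PresentedGroup.of none * chainProd (braidGen (braidRelsB n)) n := by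
  rw [phiB, chainProd, ← List.map_coe_finRange_eq_range, List.map_map]
  congr 2
  exact List.map_congr_left fun i _ => (braidGen_coe _ i).symm

lemma BraidB.isAffineBraidChain (hn : 2 ≤ n) :
    IsAffineBraidChain (braidGen (braidRelsB n)) (aB n (zero_lt_two.trans_le hn)) n := by
  have h := BraidB.isTypeBBraidChain n
  rw [aB, ← braidGen_coe, phiB_eq]
  exact (h.isChainRotation (by omega)).isAffineBraidChain h.toIsBraidChain hn

noncomputable def BraidAff.toBraidB (hn : 2 ≤ n) : BraidAff n →* BraidB n :=
  BraidAff.lift (BraidB.isAffineBraidChain hn)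

lemma BraidAff.toBraidB_of_some (hn : 2 ≤ n) (i : Fin n) :
    BraidAff.toBraidB hn (PresentedGroup.of (some i)) = PresentedGroup.of (some i) := by
  rw [← braidGen_coe, BraidAff.toBraidB, BraidAff.lift_braidGen _ i.isLt, braidGen_coe]

end BraidAffToBraidB

section RotationAutomorphism

variable {n : ℕ}

def BraidAff.rotate (hn : 2 ≤ n) : Monoid.End (BraidAff n) :=
  BraidAff.lift ((BraidAff.isAffineBraidChain n (zero_lt_two.trans_le hn)).rotate hn)

/-- The generators `σ₁, …, σₙ, a_{n+1}` as one family indexed by `0, …, n`. -/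
def BraidAff.cycGen (n k : ℕ) : BraidAff n :=
  if k < n then braidGen _ k else PresentedGroup.of none

lemma BraidAff.rotate_cycGen (hn : 2 ≤ n) {k : ℕ} (hk : k < n) :
    BraidAff.rotate hn (cycGen n k) = cycGen n (k + 1) := by
  rw [cycGen, if_pos hk]
  exact BraidAff.lift_braidGen _ hk

lemma BraidAff.rotate_cycGen_self (hn : 2 ≤ n) :
    BraidAff.rotate hn (cycGen n n) = cycGen n 0 := by
  rw [cycGen, if_neg (lt_irrefl n), cycGen, if_pos (by omega)]
  exact BraidAff.lift_of_none _

lemma BraidAff.rotate_iterate_cycGen (hn : 2 ≤ n) {j k : ℕ} (h : k + j ≤ n) :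
    (BraidAff.rotate hn)^[j] (cycGen n k) = cycGen n (k + j) := by
  induction j generalizing k with
  | zero => rfl
  | succ j ih =>
    rw [Function.iterate_succ_apply, rotate_cycGen hn (by omega), ih (by omega),
      Nat.add_right_comm, Nat.add_assoc]

lemma BraidAff.rotate_pow_succ (hn : 2 ≤ n) :
    BraidAff.rotate hn ^ (n + 1) = 1 := by
  refine PresentedGroup.ext fun x => ?_
  show (rotate hn)^[n + 1] (PresentedGroup.of x) = PresentedGroup.of x
  obtain ⟨k, hk, hx⟩ : ∃ k ≤ n, cycGen n k = PresentedGroup.of x := by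
    cases x with
    | none => exact ⟨n, le_rfl, if_neg (lt_irrefl n)⟩
    | some i => exact ⟨i, i.isLt.le, by rw [cycGen, if_pos i.isLt, braidGen_coe]⟩
  -- `n - k` steps take `cycGen n k` to `a_{n+1}`, one more to `σ₁`, and `k` more back.
  rw [← hx, show n + 1 = k + (1 + (n - k)) by omega,
    Function.iterate_add_apply, Function.iterate_add_apply, rotate_iterate_cycGen hn (by omega),
    Function.iterate_one, Nat.add_sub_cancel' hk, rotate_cycGen_self,
    rotate_iterate_cycGen hn (by omega), Nat.zero_add]

def BraidAff.rotateAut (hn : 2 ≤ n) : MulAut (BraidAff n) :=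
  MonoidHom.toMulEquiv (rotate hn) (rotate hn ^ n)
    (show rotate hn ^ n * rotate hn = 1 by rw [← pow_succ, rotate_pow_succ])
    (show rotate hn * rotate hn ^ n = 1 by rw [← pow_succ', rotate_pow_succ])

end RotationAutomorphism

section Semidirect

open SemidirectProduct

variable {n : ℕ}

def BraidAff.rotateAction (hn : 2 ≤ n) : Multiplicative ℤ →* MulAut (BraidAff n) :=
  zpowersHom _ (rotateAut hn)

lemma BraidAff.semiconjBy_inr_inl (hn : 2 ≤ n) (g : BraidAff n) :
    SemiconjBy (inr (.ofAdd 1) : BraidAff n ⋊[rotateAction hn] Multiplicative ℤ) (inl g)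
      (inl (rotate hn g)) := by
  have hρ : rotateAction hn (.ofAdd 1) g = rotate hn g := by
    rw [rotateAction, zpowersHom_apply, toAdd_ofAdd, zpow_one]
    rfl
  rw [SemiconjBy, ← hρ, inl_aut, map_inv, inv_mul_cancel_right]

lemma BraidAff.isChainRotation_inr (hn : 2 ≤ n) :
    IsChainRotation (fun k => (inl (braidGen (braidRelsAff n) k) :
      BraidAff n ⋊[rotateAction hn] Multiplicative ℤ)) n (inr (.ofAdd 1)) where
  shift i hi := by
    have h := semiconjBy_inr_inl hn (cycGen n i)
    rw [rotate_cycGen hn (by omega)] at h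
    simpa only [cycGen, if_pos hi, if_pos (show i < n by omega)] using h
  sq_last := by
    have h₁ := semiconjBy_inr_inl hn (cycGen n (n - 1))
    have h₂ := semiconjBy_inr_inl hn (cycGen n n)
    rw [rotate_cycGen hn (by omega), Nat.sub_add_cancel (by omega)] at h₁
    rw [rotate_cycGen_self] at h₂
    simpa only [cycGen, if_pos (show n - 1 < n by omega), if_pos (show 0 < n by omega)] using
      h₂.mul_left h₁

noncomputable def BraidB.toSemidirect (hn : 2 ≤ n) :
    BraidB n →* BraidAff n ⋊[BraidAff.rotateAction hn] Multiplicative ℤ :=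
  BraidB.lift <| (BraidAff.isChainRotation_inr hn).isTypeBBraidChain
    ((BraidAff.isAffineBraidChain n (zero_lt_two.trans_le hn)).map inl)
    (zero_lt_two.trans_le hn)

lemma BraidB.toSemidirect_phiB (hn : 2 ≤ n) : toSemidirect hn (phiB n) = inr (.ofAdd 1) := by
  rw [phiB_eq, map_mul, toSemidirect, lift_of_none, map_chainProd,
    chainProd_congr fun k hk => lift_braidGen _ hk, inv_mul_cancel_right]

lemma BraidB.toSemidirect_comp_toBraidB (hn : 2 ≤ n) :
    (toSemidirect hn).comp (BraidAff.toBraidB hn) = inl := by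
  refine PresentedGroup.ext fun x => ?_
  rw [MonoidHom.comp_apply]
  cases x with
  | some i =>
    rw [BraidAff.toBraidB_of_some, ← braidGen_coe, ← braidGen_coe]
    exact lift_braidGen _ i.isLt
  | none =>
    have h := BraidAff.semiconjBy_inr_inl hn (BraidAff.cycGen n (n - 1))
    rw [BraidAff.rotate_cycGen hn (by omega), Nat.sub_add_cancel (by omega)] at h
    rw [BraidAff.toBraidB, BraidAff.lift_of_none, aB, map_mul, map_mul, map_inv,
      toSemidirect_phiB, ← braidGen_coe, toSemidirect, lift_braidGen _ (by simp; omega)]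
    simpa only [BraidAff.cycGen, if_pos (show n - 1 < n by omega), lt_irrefl, if_false]
      using mul_inv_eq_of_eq_mul h.eq

end Semidirect

theorem stmt_3 (n : ℕ) (hn : 2 ≤ n) :
    ∃ ι : BraidAff n →* BraidB n,
      Function.Injective ι ∧
      (∀ i : Fin n, ι (PresentedGroup.of (some i)) = PresentedGroup.of (some i)) ∧
      ι (PresentedGroup.of none) = aB n (by omega) := by
  refine ⟨BraidAff.toBraidB hn, ?_, BraidAff.toBraidB_of_some hn, BraidAff.lift_of_none _⟩
  refine Function.Injective.of_comp (f := BraidB.toSemidirect hn) ?_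
  rw [← MonoidHom.coe_comp, BraidB.toSemidirect_comp_toBraidB]
  exact SemidirectProduct.inl_injective
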